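/- arXiv:2208.03884 — 4 statements merged into one kernel-verified Lean document; each statement's English description precedes it below -/
import Mathlib

section
/- Let F : F_{p^n} → F_{p^n} be a function, c ∈ F_{p^n}, and A : F_{p^n} → F_{p^n} an F_p-affine permutation written as A = L + s where L is F_p-linear and bijective and s ∈ F_{p^n}. Then for all a, b ∈ F_{p^n}, #{x : F(x+a) − c·F(x) = b} = #{x : (F∘A)(x + L⁻¹(a)) − c·(F∘A)(x) = b}. Consequently the c-differential uniformities of F and F∘A are equal. -/
open Finset

theorem cDDT_precompose_affine (p n : ℕ) (hp : p.Prime) (hn : 0 < n)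
    (K : Type*) [Field K] [Fintype K] [DecidableEq K] (hK : Fintype.card K = p ^ n)
    [CharP K p] [Algebra (ZMod p) K] (F : K → K) (c : K)
    (L : K ≃ₗ[ZMod p] K) (s : K) (A : K → K) (hA : ∀ x, A x = L x + s) :
    (∀ a b : K,
      (Finset.univ.filter fun x : K => F (x + a) - c * F x = b).card =
        (Finset.univ.filter fun x : K =>
          F (A (x + L.symm a)) - c * F (A x) = b).card) ∧
    (Finset.sup (Finset.univ.filter fun ab : K × K => c = 1 → ab.1 ≠ 0)
        (fun ab => (Finset.univ.filter fun x : K => F (x + ab.1) - c * F x = ab.2).card) =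
      Finset.sup (Finset.univ.filter fun ab : K × K => c = 1 → ab.1 ≠ 0)
        (fun ab =>
          (Finset.univ.filter fun x : K => F (A (x + ab.1)) - c * F (A x) = ab.2).card)) := by
  have hAbij : Function.Bijective A := by
    have hAe : A = fun x => L x + s := funext hA
    rw [hAe]
    exact (L.toEquiv.trans (Equiv.addRight s)).bijective
  set eA : K ≃ K := Equiv.ofBijective A hAbij with heA
  have heAapp : ∀ x, eA x = A x := fun x => rfl
  have hAadd : ∀ (x a : K), A (x + L.symm a) = A x + a := by
    intro x a
    rw [hA, hA, map_add, L.apply_symm_apply]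
    ring
  have key : ∀ a b : K,
      (Finset.univ.filter fun x : K => F (x + a) - c * F x = b).card =
        (Finset.univ.filter fun x : K =>
          F (A (x + L.symm a)) - c * F (A x) = b).card := by
    intro a b
    rw [← Fintype.card_subtype, ← Fintype.card_subtype]
    apply Fintype.card_congr
    refine eA.symm.subtypeEquiv fun x => ?_
    rw [hAadd, ← heAapp, eA.apply_symm_apply]
  refine ⟨key, ?_⟩
  set S : Finset (K × K) := Finset.univ.filter fun ab : K × K => c = 1 → ab.1 ≠ 0 with hS
  have key2 : ∀ ab : K × K,
      (Finset.univ.filter fun x : K => F (A (x + ab.1)) - c * F (A x) = ab.2).card =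
        (Finset.univ.filter fun x : K => F (x + L ab.1) - c * F x = ab.2).card := by
    intro ab
    rw [key (L ab.1) ab.2]
    simp only [L.symm_apply_apply]
  have himg : S.image (fun ab : K × K => (L ab.1, ab.2)) = S := by
    ext ab
    simp only [hS, mem_image, mem_filter, mem_univ, true_and]
    constructor
    · rintro ⟨x, hx, rfl⟩
      intro hc h
      exact hx hc (by simpa using congrArg L.symm h)
    · intro h
      refine ⟨(L.symm ab.1, ab.2), fun hc h' => h hc (by simpa using congrArg L h'), by simp⟩
  calc S.sup (fun ab => (Finset.univ.filter fun x : K => F (x + ab.1) - c * F x = ab.2).card)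
      = (S.image (fun ab : K × K => (L ab.1, ab.2))).sup
          (fun ab => (Finset.univ.filter fun x : K => F (x + ab.1) - c * F x = ab.2).card) := by
        rw [himg]
    _ = S.sup (fun ab => (Finset.univ.filter fun x : K =>
          F (x + L ab.1) - c * F x = ab.2).card) := by
        rw [Finset.sup_image]
        rfl
    _ = S.sup (fun ab => (Finset.univ.filter fun x : K =>
          F (A (x + ab.1)) - c * F (A x) = ab.2).card) := by
        apply Finset.sup_congr rfl
        intro ab _
        exact (key2 ab).symm
end

section
/- Let F : F_{p^n} → F_{p^n} be a function, c ∈ F_{p^n}, and A = L + s with L an F_p-linear permutation of F_{p^n} and s ∈ F_{p^n}. Suppose L(c·x) = c·L(x) for all x ∈ F_{p^n}. Then for all a, b ∈ F_{p^n}, #{x : F(x+a) − c·F(x) = b} = #{x : (A∘F)(x+a) − c·(A∘F)(x) = L(b) + (1−c)·s}. Consequently the c-differential uniformities of F and A∘F are equal. -/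
set_option maxHeartbeats 1000000


open Finset

theorem cDDT_postcompose_affine (p n : ℕ) (hp : p.Prime) (hn : 0 < n)
    (K : Type*) [Field K] [Fintype K] [DecidableEq K] (hK : Fintype.card K = p ^ n)
    [CharP K p] [Algebra (ZMod p) K] (F : K → K) (c : K)
    (L : K ≃ₗ[ZMod p] K) (s : K) (A : K → K) (hA : ∀ x, A x = L x + s)
    (hLc : ∀ x : K, L (c * x) = c * L x) :
    (∀ a b : K,
      (Finset.univ.filter fun x : K => F (x + a) - c * F x = b).card =
        (Finset.univ.filter fun x : K =>
          A (F (x + a)) - c * A (F x) = L b + (1 - c) * s).card) ∧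
    (Finset.sup (Finset.univ.filter fun ab : K × K => c = 1 → ab.1 ≠ 0)
        (fun ab => (Finset.univ.filter fun x : K => F (x + ab.1) - c * F x = ab.2).card) =
      Finset.sup (Finset.univ.filter fun ab : K × K => c = 1 → ab.1 ≠ 0)
        (fun ab =>
          (Finset.univ.filter fun x : K => A (F (x + ab.1)) - c * A (F x) = ab.2).card)) := by
  have key : ∀ a b x : K,
      (A (F (x + a)) - c * A (F x) = L b + (1 - c) * s) ↔ (F (x + a) - c * F x = b) := by
    intro a b x
    have h1 : A (F (x + a)) - c * A (F x) = L (F (x + a) - c * F x) + (1 - c) * s := by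
      rw [hA, hA, map_sub, hLc]
      ring
    rw [h1]
    constructor
    · intro h
      exact L.injective (add_right_cancel h)
    · intro h; rw [h]
  have part1 : ∀ a b : K,
      (Finset.univ.filter fun x : K => F (x + a) - c * F x = b).card =
        (Finset.univ.filter fun x : K =>
          A (F (x + a)) - c * A (F x) = L b + (1 - c) * s).card := by
    intro a b
    congr 1
    apply Finset.filter_congr
    intro x _
    exact (key a b x).symm
  refine ⟨part1, ?_⟩
  apply le_antisymm
  · apply Finset.sup_le
    intro ab hab
    rw [Finset.mem_filter] at hab
    have := part1 ab.1 ab.2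
    rw [this]
    exact Finset.le_sup (f := fun cd : K × K => (Finset.univ.filter fun x : K =>
      A (F (x + cd.1)) - c * A (F x) = cd.2).card) (b := (ab.1, L ab.2 + (1 - c) * s))
      (s := Finset.univ.filter fun cd : K × K => c = 1 → cd.1 ≠ 0)
      (Finset.mem_filter.mpr ⟨Finset.mem_univ _, hab.2⟩)
  · apply Finset.sup_le
    intro ab hab
    rw [Finset.mem_filter] at hab
    set b' : K := L.symm (ab.2 - (1 - c) * s) with hb'
    have hab2 : ab.2 = L b' + (1 - c) * s := by
      rw [hb', L.apply_symm_apply]; ring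
    have : (Finset.univ.filter fun x : K => A (F (x + ab.1)) - c * A (F x) = ab.2).card
        = (Finset.univ.filter fun x : K => F (x + ab.1) - c * F x = b').card := by
      rw [part1 ab.1 b', hab2]
    rw [this]
    exact Finset.le_sup (f := fun cd : K × K => (Finset.univ.filter fun x : K =>
      F (x + cd.1) - c * F x = cd.2).card) (b := (ab.1, b'))
      (s := Finset.univ.filter fun cd : K × K => c = 1 → cd.1 ≠ 0)
      (Finset.mem_filter.mpr ⟨Finset.mem_univ _, hab.2⟩)
end

section
/- Let K be a field of characteristic p and d ≥ 2 with p not dividing d(d−1). Suppose f ∈ K[x] is monic of degree d. Then for every nonzero a ∈ K, the polynomial f'(x)·f''(x+a) − f'(x+a)·f''(x) has degree exactly 2d−4, with leading coefficient −a·d²·(d−1). -/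
/-!
Write `P = f'`. The polynomial in question is the Wronskian `W(P, Q)` of `P` and its shift
`Q(x) = P(x + a)`, and `W(P, Q) = W(P, Q - P)`. Taylor expansion shows that `Q - P` has degree
`d - 2` and leading coefficient `(d - 1) a d`, while the coefficient of `W(u, v)` in degree
`deg u + deg v - 1` is `(deg v - deg u) lc(u) lc(v)`. Here `deg v - deg u = -1`, and
`p ∤ d (d - 1)` makes all the leading coefficients involved nonzero.
-/

open Polynomial

namespace Polynomial

section Semiring

variable {R : Type*} [Semiring R] {p : R[X]} {n : ℕ}

theorem natDegree_derivative_of_natDegree_eq_succ (hp : p.natDegree = n + 1)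
    (h : p.leadingCoeff * (n + 1) ≠ 0) : p.derivative.natDegree = n := by
  refine natDegree_eq_of_le_of_coeff_ne_zero ?_ (by rwa [coeff_derivative, ← hp])
  have := natDegree_derivative_le p
  omega

theorem leadingCoeff_derivative_of_natDegree_eq_succ (hp : p.natDegree = n + 1)
    (h : p.leadingCoeff * (n + 1) ≠ 0) :
    p.derivative.leadingCoeff = p.leadingCoeff * (n + 1) := by
  rw [leadingCoeff, natDegree_derivative_of_natDegree_eq_succ hp h, coeff_derivative, ← hp]
  rfl

end Semiring

section Wronskian

variable {R : Type*} [CommRing R]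

theorem coeff_mul_derivative_of_natDegree_le {p q : R[X]} {m n : ℕ} (hp : p.natDegree ≤ m)
    (hq : q.natDegree ≤ n) :
    (p * derivative q).coeff (m + n - 1) = n * p.coeff m * q.coeff n := by
  cases n with
  | zero => simp [derivative_of_natDegree_zero (Nat.le_zero.mp hq)]
  | succ n =>
    have hq' : (derivative q).natDegree ≤ n := by
      have := natDegree_derivative_le q
      omega
    rw [Nat.add_sub_assoc (by omega), Nat.add_sub_cancel, coeff_mul_add_eq_of_natDegree_le hp hq',
      coeff_derivative]
    push_cast
    ring

theorem coeff_wronskian_of_natDegree_le {p q : R[X]} {m n : ℕ} (hp : p.natDegree ≤ m)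
    (hq : q.natDegree ≤ n) :
    (wronskian p q).coeff (m + n - 1) = ((n : R) - m) * p.coeff m * q.coeff n := by
  rw [wronskian, coeff_sub, mul_comm (derivative p), coeff_mul_derivative_of_natDegree_le hp hq,
    add_comm m n, coeff_mul_derivative_of_natDegree_le hq hp]
  ring

variable {p q : R[X]}

theorem coeff_wronskian_natDegree_add_natDegree_sub_one :
    (wronskian p q).coeff (p.natDegree + q.natDegree - 1) =
      ((q.natDegree : R) - p.natDegree) * p.leadingCoeff * q.leadingCoeff :=
  coeff_wronskian_of_natDegree_le le_rfl le_rfl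

theorem natDegree_wronskian_of_ne_zero
    (h : ((q.natDegree : R) - p.natDegree) * p.leadingCoeff * q.leadingCoeff ≠ 0) :
    (wronskian p q).natDegree = p.natDegree + q.natDegree - 1 := by
  rw [← coeff_wronskian_natDegree_add_natDegree_sub_one] at h
  have hw : wronskian p q ≠ 0 := fun hw ↦ h (by rw [hw, coeff_zero])
  have := natDegree_wronskian_lt_add hw
  have := le_natDegree_of_ne_zero h
  omega

theorem leadingCoeff_wronskian_of_ne_zero
    (h : ((q.natDegree : R) - p.natDegree) * p.leadingCoeff * q.leadingCoeff ≠ 0) :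
    (wronskian p q).leadingCoeff =
      ((q.natDegree : R) - p.natDegree) * p.leadingCoeff * q.leadingCoeff := by
  rw [leadingCoeff, natDegree_wronskian_of_ne_zero h,
    coeff_wronskian_natDegree_add_natDegree_sub_one]

theorem wronskian_sub_self_right (p q : R[X]) : wronskian p (q - p) = wronskian p q := by
  rw [sub_eq_add_neg, wronskian_add_right, wronskian_neg_right, wronskian_self_eq_zero, neg_zero,
    add_zero]

end Wronskian

section Taylor

variable {R : Type*} [CommRing R] {p : R[X]} {n : ℕ} (r : R)

theorem coeff_taylor_of_natDegree_le_succ (hp : p.natDegree ≤ n + 1) :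
    (taylor r p).coeff n = p.coeff n + (n + 1) * r * p.coeff (n + 1) := by
  have hdeg : (hasseDeriv n p).natDegree < 2 := by
    have := natDegree_hasseDeriv_le p n
    omega
  rw [taylor_coeff, eval_eq_sum_range' hdeg, Finset.sum_range_succ, Finset.sum_range_one,
    hasseDeriv_coeff, hasseDeriv_coeff, zero_add, Nat.choose_self, add_comm 1 n,
    Nat.choose_succ_self_right]
  push_cast
  ring

theorem natDegree_taylor_sub_self_le (hp : p.natDegree = n + 1) :
    (taylor r p - p).natDegree ≤ n := by
  rw [natDegree_le_iff_coeff_eq_zero]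
  intro k hk
  rw [coeff_sub]
  obtain rfl | hk := (show n + 1 ≤ k by omega).eq_or_lt
  · rw [← hp, coeff_taylor_natDegree, leadingCoeff, sub_self]
  · rw [coeff_eq_zero_of_natDegree_lt (by rwa [natDegree_taylor, hp]),
      coeff_eq_zero_of_natDegree_lt (by rwa [hp]), sub_self]

theorem coeff_taylor_sub_self (hp : p.natDegree = n + 1) :
    (taylor r p - p).coeff n = (n + 1) * r * p.leadingCoeff := by
  rw [coeff_sub, coeff_taylor_of_natDegree_le_succ r hp.le, add_sub_cancel_left, leadingCoeff, hp]

theorem natDegree_taylor_sub_self (hp : p.natDegree = n + 1)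
    (h : (n + 1) * r * p.leadingCoeff ≠ 0) : (taylor r p - p).natDegree = n :=
  natDegree_eq_of_le_of_coeff_ne_zero (natDegree_taylor_sub_self_le r hp)
    (by rwa [coeff_taylor_sub_self r hp])

theorem leadingCoeff_taylor_sub_self (hp : p.natDegree = n + 1)
    (h : (n + 1) * r * p.leadingCoeff ≠ 0) :
    (taylor r p - p).leadingCoeff = (n + 1) * r * p.leadingCoeff := by
  rw [leadingCoeff, natDegree_taylor_sub_self r hp h, coeff_taylor_sub_self r hp]

theorem wronskian_taylor_sub_self (p : R[X]) :
    wronskian p (taylor r p - p) =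
      p * p.derivative.comp (X + C r) - p.comp (X + C r) * p.derivative := by
  rw [wronskian_sub_self_right, wronskian, taylor_apply, derivative_comp]
  simp only [derivative_add, derivative_X, derivative_C, add_zero, one_mul]
  ring

theorem degree_and_leadingCoeff_wronskian_taylor_sub_self (hp : p.natDegree = n + 1)
    (h : (n + 1) * r * p.leadingCoeff * p.leadingCoeff ≠ 0) :
    (wronskian p (taylor r p - p)).degree = (2 * n : ℕ) ∧
      (wronskian p (taylor r p - p)).leadingCoeff =
        -((n + 1) * r * p.leadingCoeff * p.leadingCoeff) := by
  have hq := left_ne_zero_of_mul h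
  have hc : (((taylor r p - p).natDegree : R) - p.natDegree) * p.leadingCoeff *
      (taylor r p - p).leadingCoeff = -((n + 1) * r * p.leadingCoeff * p.leadingCoeff) := by
    rw [natDegree_taylor_sub_self r hp hq, leadingCoeff_taylor_sub_self r hp hq, hp]
    push_cast
    ring
  have hne := hc ▸ neg_ne_zero.mpr h
  have hlc := leadingCoeff_wronskian_of_ne_zero hne
  have hw : wronskian p (taylor r p - p) ≠ 0 := by
    rw [← leadingCoeff_ne_zero, hlc]
    exact hne
  rw [degree_eq_natDegree hw, natDegree_wronskian_of_ne_zero hne, hp,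
    natDegree_taylor_sub_self r hp hq, hlc, hc]
  exact ⟨congrArg _ (by omega), rfl⟩

end Taylor

end Polynomial

theorem wronskian_type_degree (K : Type*) [Field K] (p : ℕ) [CharP K p]
    (d : ℕ) (hd : 2 ≤ d) (hpd : ¬ p ∣ d * (d - 1))
    (f : K[X]) (hf : f.Monic) (hdeg : f.natDegree = d) (a : K) (ha : a ≠ 0) :
    (f.derivative * ((f.derivative.derivative).comp (X + C a)) -
        (f.derivative.comp (X + C a)) * f.derivative.derivative).degree =
      ((2 * d - 4 : ℕ) : WithBot ℕ) ∧
    (f.derivative * ((f.derivative.derivative).comp (X + C a)) -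
        (f.derivative.comp (X + C a)) * f.derivative.derivative).leadingCoeff =
      -(a * (d : K) ^ 2 * ((d : K) - 1)) := by
  obtain ⟨n, rfl⟩ := Nat.exists_eq_add_of_le' hd
  rw [show n + 2 - 1 = n + 1 by omega] at hpd
  have hd₀ : ((n + 2 : ℕ) : K) ≠ 0 := fun h ↦
    hpd (((CharP.cast_eq_zero_iff K p _).mp h).mul_right _)
  have hd₁ : ((n + 1 : ℕ) : K) ≠ 0 := fun h ↦
    hpd (((CharP.cast_eq_zero_iff K p _).mp h).mul_left _)
  have hf' : f.leadingCoeff * ((n + 1 : ℕ) + 1) ≠ 0 := by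
    rwa [hf.leadingCoeff, one_mul, ← Nat.cast_succ]
  have hP : f.derivative.natDegree = n + 1 := natDegree_derivative_of_natDegree_eq_succ hdeg hf'
  have hPlc : f.derivative.leadingCoeff = (n + 2 : ℕ) := by
    rw [leadingCoeff_derivative_of_natDegree_eq_succ hdeg hf', hf.leadingCoeff]
    push_cast
    ring
  have hne : ((n : K) + 1) * a * f.derivative.leadingCoeff * f.derivative.leadingCoeff ≠ 0 := by
    rw [hPlc]
    exact mul_ne_zero (mul_ne_zero (mul_ne_zero (mod_cast hd₁) ha) hd₀) hd₀
  obtain ⟨hWdeg, hWlc⟩ := degree_and_leadingCoeff_wronskian_taylor_sub_self a hP hne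
  rw [wronskian_taylor_sub_self] at hWdeg hWlc
  rw [hWdeg, hWlc, hPlc]
  exact ⟨congrArg _ (by omega), by push_cast; ring⟩
end

section
/- Let K be a field, d ≥ 2, and ξ ∈ K with ξ^{d−1} = 1. In the quotient ring K[X,Y]/((Y+1)X − ξ(X+1)Y), the polynomial (X+1)^{d−1}(Y^d − X^d) − X^{d−1}((Y+1)^d − (X+1)^d) is congruent to (X+1)^{d−1}(X^{d−1} − Y^{d−1}). -/
open MvPolynomial

theorem congruence_mod_linear_factor (K : Type*) [Field K]
    (d : ℕ) (hd : 2 ≤ d) (ξ : K) (hξ : ξ ^ (d - 1) = 1) :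
    Ideal.Quotient.mk
        (Ideal.span {((X 1 + 1) * X 0 - C ξ * ((X 0 + 1) * X 1) : MvPolynomial (Fin 2) K)})
        ((X 0 + 1) ^ (d - 1) * ((X 1) ^ d - (X 0) ^ d) -
          (X 0) ^ (d - 1) * ((X 1 + 1) ^ d - (X 0 + 1) ^ d)) =
      Ideal.Quotient.mk _
        ((X 0 + 1) ^ (d - 1) * ((X 0) ^ (d - 1) - (X 1) ^ (d - 1))) := by
  rw [Ideal.Quotient.eq, Ideal.mem_span_singleton]
  obtain ⟨e, rfl⟩ : ∃ e, d = e + 1 := ⟨d - 1, by omega⟩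
  simp only [Nat.add_sub_cancel] at hξ ⊢
  have hdvd := sub_dvd_pow_sub_pow ((X 1 + 1) * X 0)
    (C ξ * ((X 0 + 1) * X 1) : MvPolynomial (Fin 2) K) e
  have hb : (C ξ * ((X 0 + 1) * X 1) : MvPolynomial (Fin 2) K) ^ e
      = ((X 0 + 1) * X 1) ^ e := by
    rw [mul_pow, ← map_pow, hξ, map_one, one_mul]
  have key : (X 0 + 1) ^ e * ((X 1 : MvPolynomial (Fin 2) K) ^ (e + 1) - (X 0) ^ (e + 1)) -
          (X 0) ^ e * ((X 1 + 1) ^ (e + 1) - (X 0 + 1) ^ (e + 1)) -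
        (X 0 + 1) ^ e * ((X 0) ^ e - (X 1) ^ e)
      = -(X 1 + 1) * (((X 1 + 1) * X 0) ^ e - (C ξ * ((X 0 + 1) * X 1)) ^ e) := by
    rw [hb, mul_pow, mul_pow]; ring
  rw [key]
  exact Dvd.dvd.mul_left hdvd _
end
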